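/- arXiv:1907.12544 — 2 statements merged into one kernel-verified Lean document; each statement's English description precedes it below -/
import Mathlib

section
/- Let G be a discrete group, I a nonempty set, T = I × G × I, and S = B(I,G). Let Ψ : ℓ¹(T) → ℓ¹(S) be defined by Ψ(b)(t) := b(t) for t ∈ T and Ψ(b)(o) := −Σ_{s∈T} b(s), and let Θ : ℓ¹(S) → ℓ¹(T) be the restriction map Θ(a) := a|_T. Then Θ is a continuous algebra homomorphism and Θ ∘ Ψ = Id on ℓ¹(T). -/
open Filter Topology
open scoped ENNReal TensorProduct Classical

noncomputable section

/-- The Banach space `ℓ¹(X)` of absolutely summable complex functions on `X`. -/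
abbrev l1 (X : Type*) : Type _ := lp (fun _ : X => ℂ) 1

section Defs

variable {I G : Type*} [Group G]

/-- The multiplication of the Brandt semigroup `S = B(I,G) = (I × G × I) ∪ {o}`,
where the zero element `o` is encoded as `none`. -/
def brandtMul : Option (I × G × I) → Option (I × G × I) → Option (I × G × I)
  | some (i, g, j), some (i', g', j') => if j = i' then some (i, g * g', j') else none
  | _, _ => none

/-- Spec: `mul` is the convolution product on `ℓ¹(T)`, `T = I × G × I`:
`(ab)(i,g,j) = Σ_{k ∈ I, h ∈ G} a(i, g h⁻¹, k) b(k, h, j)`. -/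
def IsConvT (mul : l1 (I × G × I) → l1 (I × G × I) → l1 (I × G × I)) : Prop :=
  ∀ (a b : l1 (I × G × I)) (i : I) (g : G) (j : I),
    mul a b (i, g, j) = ∑' p : I × G, a (i, g * p.2⁻¹, p.1) * b (p.1, p.2, j)

/-- Spec: `mul` is the convolution product on the group algebra `ℓ¹(G)`. -/
def IsConvG (mul : l1 G → l1 G → l1 G) : Prop :=
  ∀ (a b : l1 G) (g : G), mul a b g = ∑' h : G, a (g * h⁻¹) * b h

/-- Spec: `act` is the left module action of `ℓ¹(T)` on `ℓ¹(T × T) = ℓ¹(T) ⊗̂ ℓ¹(T)`,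
determined by `a·(x ⊗ y) = (ax) ⊗ y`. -/
def IsLeftActT
    (act : l1 (I × G × I) → l1 ((I × G × I) × (I × G × I)) → l1 ((I × G × I) × (I × G × I))) :
    Prop :=
  ∀ (a : l1 (I × G × I)) (w : l1 ((I × G × I) × (I × G × I))) (i : I) (g : G) (j : I)
    (t' : I × G × I),
    act a w ((i, g, j), t') = ∑' p : I × G, a (i, g * p.2⁻¹, p.1) * w ((p.1, p.2, j), t')

/-- Spec: `act` is the right module action of `ℓ¹(T)` on `ℓ¹(T × T) = ℓ¹(T) ⊗̂ ℓ¹(T)`,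
determined by `(x ⊗ y)·a = x ⊗ (ya)`. -/
def IsRightActT
    (act : l1 ((I × G × I) × (I × G × I)) → l1 (I × G × I) → l1 ((I × G × I) × (I × G × I))) :
    Prop :=
  ∀ (w : l1 ((I × G × I) × (I × G × I))) (a : l1 (I × G × I)) (t : I × G × I) (i : I) (g : G)
    (j : I),
    act w a (t, (i, g, j)) = ∑' p : I × G, w (t, (i, g * p.2⁻¹, p.1)) * a (p.1, p.2, j)

/-- Spec: `d` is the diagonal map `π : ℓ¹(T × T) = ℓ¹(T) ⊗̂ ℓ¹(T) → ℓ¹(T)`,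
determined by `δ_x ⊗ δ_y ↦ δ_x δ_y`. -/
def IsDiagT (d : l1 ((I × G × I) × (I × G × I)) → l1 (I × G × I)) : Prop :=
  ∀ (w : l1 ((I × G × I) × (I × G × I))) (i : I) (g : G) (j : I),
    d w (i, g, j) = ∑' p : I × G, w ((i, g * p.2⁻¹, p.1), (p.1, p.2, j))

/-- Spec: `act` is the left module action of `ℓ¹(G)` on `ℓ¹(G × G) = ℓ¹(G) ⊗̂ ℓ¹(G)`. -/
def IsLeftActG (act : l1 G → l1 (G × G) → l1 (G × G)) : Prop :=
  ∀ (a : l1 G) (w : l1 (G × G)) (g g' : G),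
    act a w (g, g') = ∑' h : G, a (g * h⁻¹) * w (h, g')

/-- Spec: `act` is the right module action of `ℓ¹(G)` on `ℓ¹(G × G) = ℓ¹(G) ⊗̂ ℓ¹(G)`. -/
def IsRightActG (act : l1 (G × G) → l1 G → l1 (G × G)) : Prop :=
  ∀ (w : l1 (G × G)) (a : l1 G) (g g' : G),
    act w a (g, g') = ∑' h : G, w (g, g' * h⁻¹) * a h

/-- Spec: `d` is the diagonal map `π : ℓ¹(G × G) = ℓ¹(G) ⊗̂ ℓ¹(G) → ℓ¹(G)`. -/
def IsDiagG (d : l1 (G × G) → l1 G) : Prop :=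
  ∀ (w : l1 (G × G)) (g : G), d w g = ∑' h : G, w (g * h⁻¹, h)

/-- Spec: `mul` is the convolution product on the semigroup algebra `ℓ¹(S)`, `S = B(I,G)`:
`(ab)(s) = Σ_{u v = s} a(u) b(v)`. -/
def IsConvS (mul : l1 (Option (I × G × I)) → l1 (Option (I × G × I)) →
    l1 (Option (I × G × I))) : Prop :=
  ∀ (a b : l1 (Option (I × G × I))) (s : Option (I × G × I)),
    mul a b s =
      ∑' p : {p : Option (I × G × I) × Option (I × G × I) // brandtMul p.1 p.2 = s},
        a p.val.1 * b p.val.2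

/-- Spec: left module action of `ℓ¹(S)` on `ℓ¹(S × S) = ℓ¹(S) ⊗̂ ℓ¹(S)`. -/
def IsLeftActS (act : l1 (Option (I × G × I)) →
    l1 (Option (I × G × I) × Option (I × G × I)) →
    l1 (Option (I × G × I) × Option (I × G × I))) : Prop :=
  ∀ (a : l1 (Option (I × G × I))) (w : l1 (Option (I × G × I) × Option (I × G × I)))
    (s s' : Option (I × G × I)),
    act a w (s, s') =
      ∑' p : {p : Option (I × G × I) × Option (I × G × I) // brandtMul p.1 p.2 = s},
        a p.val.1 * w (p.val.2, s')

/-- Spec: right module action of `ℓ¹(S)` on `ℓ¹(S × S) = ℓ¹(S) ⊗̂ ℓ¹(S)`. -/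
def IsRightActS (act : l1 (Option (I × G × I) × Option (I × G × I)) →
    l1 (Option (I × G × I)) →
    l1 (Option (I × G × I) × Option (I × G × I))) : Prop :=
  ∀ (w : l1 (Option (I × G × I) × Option (I × G × I))) (a : l1 (Option (I × G × I)))
    (s s' : Option (I × G × I)),
    act w a (s, s') =
      ∑' p : {p : Option (I × G × I) × Option (I × G × I) // brandtMul p.1 p.2 = s'},
        w (s, p.val.1) * a p.val.2

/-- Spec: the diagonal map `π : ℓ¹(S × S) = ℓ¹(S) ⊗̂ ℓ¹(S) → ℓ¹(S)`. -/
def IsDiagS (d : l1 (Option (I × G × I) × Option (I × G × I)) → l1 (Option (I × G × I))) :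
    Prop :=
  ∀ (w : l1 (Option (I × G × I) × Option (I × G × I))) (s : Option (I × G × I)),
    d w s =
      ∑' p : {p : Option (I × G × I) × Option (I × G × I) // brandtMul p.1 p.2 = s},
        w p.val

/-- Spec: `E` sends `b ∈ ℓ¹(G × G)` and `i,j,i',j' ∈ I` to the element
`E^b_{(i,j,i',j')} ∈ ℓ¹(T × T)`. -/
def IsE (E : l1 (G × G) → I → I → I → I → l1 ((I × G × I) × (I × G × I))) : Prop :=
  ∀ (b : l1 (G × G)) (i j i' j' : I),
    (∀ g g' : G, E b i j i' j' ((i, g, j), (i', g', j')) = b (g, g')) ∧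
    (∀ (u v u' v' : I) (g g' : G), (u, v, u', v') ≠ (i, j, i', j') →
      E b i j i' j' ((u, g, v), (u', g', v')) = 0)

/-- Spec: `H` sends `c ∈ ℓ¹(G)` and `i,j ∈ I` to the element `H^c_{(i,j)} ∈ ℓ¹(T)`. -/
def IsH (H : l1 G → I → I → l1 (I × G × I)) : Prop :=
  ∀ (c : l1 G) (i j : I),
    (∀ g : G, H c i j (i, g, j) = c g) ∧
    (∀ (u v : I) (g : G), (u, v) ≠ (i, j) → H c i j (u, g, v) = 0)

/-- Spec: `comp` sends `a ∈ ℓ¹(T)` and `u,v ∈ I` to `a_{(u,v)} ∈ ℓ¹(G)`,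
`a_{(u,v)}(g) = a(u,g,v)`. -/
def IsComp (comp : l1 (I × G × I) → I → I → l1 G) : Prop :=
  ∀ (a : l1 (I × G × I)) (u v : I) (g : G), comp a u v g = a (u, g, v)

/-- The net `W_{F,λ} = (1/#F) Σ_{i,j ∈ F} E^{m_λ}_{(i,j,j,i)}` in `ℓ¹(T × T)`. -/
def Wnet (E : l1 (G × G) → I → I → I → I → l1 ((I × G × I) × (I × G × I)))
    {Λ : Type*} (m : Λ → l1 (G × G)) (F : Finset I) (l : Λ) :
    l1 ((I × G × I) × (I × G × I)) :=
  (F.card : ℂ)⁻¹ • ∑ i ∈ F, ∑ j ∈ F, E (m l) i j j i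

/-- `(m_λ)` is a bounded approximate diagonal for `ℓ¹(G)` (with respect to the given
realizations of the product, the module actions on `ℓ¹(G) ⊗̂ ℓ¹(G) = ℓ¹(G × G)` and
the diagonal map). -/
def IsBddApproxDiagG {Λ : Type*} [Preorder Λ]
    (mulG : l1 G → l1 G → l1 G) (actLG : l1 G → l1 (G × G) → l1 (G × G))
    (actRG : l1 (G × G) → l1 G → l1 (G × G)) (piG : l1 (G × G) → l1 G)
    (m : Λ → l1 (G × G)) : Prop :=
  (∃ M : ℝ, ∀ l, ‖m l‖ ≤ M) ∧
  ∀ c : l1 G,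
    Tendsto (fun l => actLG c (m l) - actRG (m l) c) atTop (𝓝 0) ∧
    Tendsto (fun l => mulG (piG (m l)) c) atTop (𝓝 c)

end Defs

/-- Pseudo-amenability of an `ℓ¹`-type Banach algebra `A = ℓ¹(X)`, whose projective tensor
square `A ⊗̂ A` is realized concretely as `M = ℓ¹(X × X)`: there is a net (equivalently, a
nontrivial filtered family) `w` in `M` such that `a·w_n − w_n·a → 0` and `π(w_n)a → a` for
every `a ∈ A`. -/
def HasApproxDiag {A M : Type*} [NormedAddCommGroup A] [NormedAddCommGroup M]
    (mul : A → A → A) (actL : A → M → M) (actR : M → A → M) (diag : M → A) : Prop :=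
  ∃ (ι : Type*) (F : Filter ι), F.NeBot ∧ ∃ w : ι → M,
    ∀ a : A,
      Tendsto (fun n => actL a (w n) - actR (w n) a) F (𝓝 0) ∧
      Tendsto (fun n => mul (diag (w n)) a) F (𝓝 a)

/-- A discrete group `G` is amenable: there is a left-invariant mean on `ℓ∞(G)`,
i.e. a positive normalized left translation invariant linear functional. -/
def AmenableGroup (G : Type*) [Group G] : Prop :=
  ∃ m : lp (fun _ : G => ℝ) ∞ →ₗ[ℝ] ℝ,
    (∀ f : lp (fun _ : G => ℝ) ∞, (∀ x, 0 ≤ f x) → 0 ≤ m f) ∧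
    (∀ f : lp (fun _ : G => ℝ) ∞, (∀ x, f x = 1) → m f = 1) ∧
    (∀ (g : G) (f f' : lp (fun _ : G => ℝ) ∞), (∀ x, f' x = f (g * x)) → m f' = m f)

/-- The projective tensor seminorm on the algebraic tensor product `A ⊗[ℂ] A`:
the infimum of `Σ ‖x_k‖ ‖y_k‖` over all finite representations `Σ x_k ⊗ y_k`. -/
def projSeminorm (A : Type*) [NormedAddCommGroup A] [NormedSpace ℂ A] (x : A ⊗[ℂ] A) : ℝ :=
  sInf {r : ℝ | ∃ (n : ℕ) (f : Fin n → A × A),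
    x = ∑ k, (f k).1 ⊗ₜ[ℂ] (f k).2 ∧ r = ∑ k, ‖(f k).1‖ * ‖(f k).2‖}

/-- A Banach algebra `A` is pseudo-amenable: there is a net (equivalently, a nontrivial
filtered family) `(w_n)` in `A ⊗̂ A` with `a·w_n − w_n·a → 0` and `π(w_n)a → a` for every
`a ∈ A`, where `π` is the diagonal map and `A ⊗̂ A` carries the projective tensor seminorm. -/
def PseudoAmenable (A : Type*) [NonUnitalNormedRing A] [NormedSpace ℂ A]
    [SMulCommClass ℂ A A] [IsScalarTower ℂ A A] : Prop :=
  ∃ (ι : Type*) (F : Filter ι), F.NeBot ∧ ∃ w : ι → A ⊗[ℂ] A,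
    ∀ a : A,
      Tendsto (fun n => projSeminorm A
        (TensorProduct.map (LinearMap.mulLeft ℂ a) LinearMap.id (w n) -
          TensorProduct.map LinearMap.id (LinearMap.mulRight ℂ a) (w n))) F (𝓝 0) ∧
      Tendsto (fun n => LinearMap.mul' ℂ A (w n) * a) F (𝓝 a)

/-!
Restriction along the injective inclusion `T ↪ S` is a contraction of `ℓ¹` spaces, hence a
continuous linear map. It is multiplicative because the only factorisations of a nonzero
element `(i, g, j)` of `S` are `(i, g h⁻¹, k) (k, h, j)`, both factors lying in `T`, so the
convolution in `ℓ¹(S)` evaluated on `T` is exactly the convolution in `ℓ¹(T)`. Finally `Ψ`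
changes nothing on `T`.
-/

namespace Memℓp

variable {α β E : Type*} [NormedAddCommGroup E] {p : ℝ≥0∞}

theorem comp_injective {f : α → E} (hf : Memℓp f p) {g : β → α}
    (hg : Function.Injective g) : Memℓp (f ∘ g) p := by
  rcases p.trichotomy with rfl | rfl | hp
  · exact memℓp_zero (hf.finite_dsupport.preimage hg.injOn)
  · exact memℓp_infty (hf.bddAbove.mono (Set.range_comp_subset_range g fun i => ‖f i‖))
  · exact memℓp_gen ((hf.summable hp).comp_injective hg)

end Memℓp

namespace lp

variable {α β E : Type*} [NormedAddCommGroup E] {p : ℝ≥0∞}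

theorem norm_comp_injective_le (hp : p ≠ 0) (f : lp (fun _ : α => E) p) {g : β → α}
    (hg : Function.Injective g) :
    ‖(⟨f ∘ g, (lp.memℓp f).comp_injective hg⟩ : lp (fun _ : β => E) p)‖ ≤ ‖f‖ := by
  rcases p.trichotomy with rfl | rfl | hp'
  · exact absurd rfl hp
  · exact norm_le_of_forall_le (norm_nonneg _) fun j => norm_apply_le_norm hp f _
  · refine norm_le_of_tsum_le hp' (norm_nonneg' f) ?_
    rw [norm_rpow_eq_tsum hp']
    exact tsum_comp_le_tsum_of_inj ((lp.memℓp f).summable hp')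
      (fun _ => Real.rpow_nonneg (norm_nonneg _) _) hg

variable (𝕜 : Type*) [NormedField 𝕜] [NormedSpace 𝕜 E] [Fact (1 ≤ p)]

def compInjectiveL {g : β → α} (hg : Function.Injective g) :
    lp (fun _ : α => E) p →L[𝕜] lp (fun _ : β => E) p :=
  LinearMap.mkContinuous
    { toFun := fun f => ⟨f ∘ g, (lp.memℓp f).comp_injective hg⟩
      map_add' := fun _ _ => rfl
      map_smul' := fun _ _ => rfl }
    1 fun f =>
      (norm_comp_injective_le (zero_lt_one.trans_le Fact.out).ne' f hg).trans_eq (one_mul _).symm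

@[simp]
theorem compInjectiveL_apply {g : β → α} (hg : Function.Injective g)
    (f : lp (fun _ : α => E) p) (j : β) : compInjectiveL 𝕜 hg f j = f (g j) :=
  rfl

end lp

section Brandt

variable {I G : Type*} [Group G]

theorem brandtMul_eq_some_iff {u v : Option (I × G × I)} {i : I} {g : G} {j : I} :
    brandtMul u v = some (i, g, j) ↔
      ∃ q : I × G, u = some (i, g * q.2⁻¹, q.1) ∧ v = some (q.1, q.2, j) := by
  constructor
  · intro h
    match u, v, h with
    | some (a, b, c), some (a', b', c'), h =>
      simp only [brandtMul] at h
      split_ifs at h with hc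
      simp only [Option.some.injEq, Prod.mk.injEq] at h
      obtain ⟨rfl, rfl, rfl⟩ := h
      exact ⟨(c, b'), by simp [hc]⟩
  · rintro ⟨q, rfl, rfl⟩
    simp [brandtMul]

def brandtMulFiberEquiv (i : I) (g : G) (j : I) :
    (I × G) ≃
      {p : Option (I × G × I) × Option (I × G × I) // brandtMul p.1 p.2 = some (i, g, j)} :=
  Equiv.ofBijective
    (fun q => ⟨(some (i, g * q.2⁻¹, q.1), some (q.1, q.2, j)),
      brandtMul_eq_some_iff.2 ⟨q, rfl, rfl⟩⟩)
    ⟨fun q q' h => by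
      simp only [Subtype.mk.injEq, Prod.mk.injEq, Option.some.injEq] at h
      exact Prod.ext h.2.1 h.2.2.1,
     fun ⟨_, hp⟩ => by
      obtain ⟨q, hu, hv⟩ := brandtMul_eq_some_iff.1 hp
      exact ⟨q, Subtype.ext (Prod.ext hu.symm hv.symm)⟩⟩

theorem IsConvS.apply_some {mul : l1 (Option (I × G × I)) → l1 (Option (I × G × I)) →
      l1 (Option (I × G × I))} (hmul : IsConvS mul) (a b : l1 (Option (I × G × I))) (i : I)
    (g : G) (j : I) :
    mul a b (some (i, g, j)) =
      ∑' q : I × G, a (some (i, g * q.2⁻¹, q.1)) * b (some (q.1, q.2, j)) := by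
  rw [hmul, ← (brandtMulFiberEquiv i g j).tsum_eq]
  rfl

end Brandt

theorem brandt_l1_retraction_general {G : Type*} [Group G] {I : Type*}
    (mulS : l1 (Option (I × G × I)) → l1 (Option (I × G × I)) → l1 (Option (I × G × I)))
    (hmulS : IsConvS mulS)
    (mulT : l1 (I × G × I) → l1 (I × G × I) → l1 (I × G × I))
    (hmulT : IsConvT mulT)
    (Ψ : l1 (I × G × I) → l1 (Option (I × G × I)))
    (hΨ : ∀ (b : l1 (I × G × I)) (t : I × G × I), Ψ b (some t) = b t)
    (Θ : l1 (Option (I × G × I)) → l1 (I × G × I))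
    (hΘ : ∀ (a : l1 (Option (I × G × I))) (t : I × G × I), Θ a t = a (some t)) :
    Continuous Θ ∧ (∀ x y, Θ (x + y) = Θ x + Θ y) ∧ (∀ (c : ℂ) x, Θ (c • x) = c • Θ x) ∧
    (∀ x y, Θ (mulS x y) = mulT (Θ x) (Θ y)) ∧
    (∀ b : l1 (I × G × I), Θ (Ψ b) = b) := by
  obtain rfl : Θ = lp.compInjectiveL ℂ (Option.some_injective _) :=
    funext fun a => lp.ext (funext (hΘ a))
  refine ⟨ContinuousLinearMap.continuous _, map_add _, map_smul _, fun x y => ?_, fun b => ?_⟩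
  · ext ⟨i, g, j⟩
    rw [lp.compInjectiveL_apply, hmulS.apply_some, hmulT]
    rfl
  · ext t
    exact hΨ b t

theorem brandt_l1_retraction {G : Type*} [Group G] {I : Type*} [Nonempty I]
    (mulS : l1 (Option (I × G × I)) → l1 (Option (I × G × I)) → l1 (Option (I × G × I)))
    (hmulS : IsConvS mulS)
    (mulT : l1 (I × G × I) → l1 (I × G × I) → l1 (I × G × I))
    (hmulT : IsConvT mulT)
    (Ψ : l1 (I × G × I) → l1 (Option (I × G × I)))
    (hΨ : ∀ (b : l1 (I × G × I)) (t : I × G × I), Ψ b (some t) = b t)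
    (hΨo : ∀ b : l1 (I × G × I), Ψ b none = -∑' t : I × G × I, b t)
    (Θ : l1 (Option (I × G × I)) → l1 (I × G × I))
    (hΘ : ∀ (a : l1 (Option (I × G × I))) (t : I × G × I), Θ a t = a (some t)) :
    Continuous Θ ∧ (∀ x y, Θ (x + y) = Θ x + Θ y) ∧ (∀ (c : ℂ) x, Θ (c • x) = c • Θ x) ∧
    (∀ x y, Θ (mulS x y) = mulT (Θ x) (Θ y)) ∧
    (∀ b : l1 (I × G × I), Θ (Ψ b) = b) :=
  brandt_l1_retraction_general mulS hmulS mulT hmulT Ψ hΨ Θ hΘ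

end
end

section
/- Let G be a discrete group, I a nonempty set, T = I × G × I, and let (m_λ)_{λ∈Λ} be a bounded approximate diagonal for ℓ¹(G). For each finite nonempty subset F ⊆ I and λ ∈ Λ, set W_{F,λ} := (1/#F) Σ_{i,j∈F} E^{m_λ}_{(i,j,j,i)} ∈ ℓ¹(T × T). Then, with the index set Γ × Λ directed by inclusion of finite subsets of I in the first coordinate, for every a ∈ ℓ¹(T) one has π(W_{F,λ})a → a in norm, where π : ℓ¹(T × T) → ℓ¹(T) is the diagonal map. -/
open Filter Topology
open scoped ENNReal TensorProduct Classical

noncomputable section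

/-!
Write `c_λ = π(m_λ)`. In `π(W_{F,λ})` the factor `1/#F` cancels the `#F` choices of the middle
index, so `π(W_{F,λ})` is `c_λ` placed on the diagonal blocks `(u,u)`, `u ∈ F`. Hence the
`(u,v)`-block of `π(W_{F,λ})a − a` is `c_λ a_{uv} − a_{uv}` if `u ∈ F` and `−a_{uv}` otherwise, and
`‖π(W_{F,λ})a − a‖` is the sum of the norms of these blocks. Each block tends to `0` and is
dominated by `(M + 1)‖a_{uv}‖`, where `M` bounds `‖m_λ‖ ≥ ‖c_λ‖`, so Tannery's theorem concludes.
-/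

namespace l1

variable {X : Type*}

theorem summable_norm (f : l1 X) : Summable fun x => ‖f x‖ := by
  simpa using (lp.memℓp f).summable (by norm_num)

theorem norm_eq_tsum_norm (f : l1 X) : ‖f‖ = ∑' x, ‖f x‖ := by
  simp [lp.norm_eq_tsum_rpow (p := 1) (by norm_num)]

theorem memℓp_of_summable_norm {f : X → ℂ} (hf : Summable fun x => ‖f x‖) : Memℓp f 1 :=
  memℓp_gen (by simpa using hf)

end l1

section Block

variable {α β γ : Type*}

def block (x : l1 (α × β × γ)) (a : α) (c : γ) : l1 β :=
  ⟨fun b => x (a, b, c), l1.memℓp_of_summable_norm <|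
    (l1.summable_norm x).comp_injective fun _ _ h => (Prod.ext_iff.1 (Prod.ext_iff.1 h).2).1⟩

@[simp] theorem block_apply (x : l1 (α × β × γ)) (a : α) (b : β) (c : γ) :
    block x a c b = x (a, b, c) := rfl

variable (α β γ) in
def blockEquiv : (α × γ) × β ≃ α × β × γ :=
  (Equiv.prodAssoc α γ β).trans ((Equiv.refl α).prodCongr (Equiv.prodComm γ β))

theorem summable_norm_comp_blockEquiv (x : l1 (α × β × γ)) :
    Summable fun p : (α × γ) × β => ‖x (blockEquiv α β γ p)‖ :=
  (blockEquiv α β γ).summable_iff (f := fun t => ‖x t‖) |>.2 (l1.summable_norm x)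

theorem summable_norm_block (x : l1 (α × β × γ)) :
    Summable fun ac : α × γ => ‖block x ac.1 ac.2‖ := by
  simp only [l1.norm_eq_tsum_norm (block _ _ _), block_apply]
  exact (summable_norm_comp_blockEquiv x).prod

theorem norm_eq_tsum_norm_block (x : l1 (α × β × γ)) :
    ‖x‖ = ∑' ac : α × γ, ‖block x ac.1 ac.2‖ := by
  simp only [l1.norm_eq_tsum_norm (block _ _ _), block_apply]
  rw [l1.norm_eq_tsum_norm, ← (blockEquiv α β γ).tsum_eq]
  exact (summable_norm_comp_blockEquiv x).tsum_prod

end Block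

section GroupAlgebra

variable {G : Type*} [Group G]

variable (G) in
def mulInvShear : G × G ≃ G × G where
  toFun p := (p.1 * p.2⁻¹, p.2)
  invFun p := (p.1 * p.2, p.2)
  left_inv p := by simp
  right_inv p := by simp

theorem tsum_norm_tsum_mul_inv_le {f : G × G → ℂ} (hf : Summable fun p => ‖f p‖) :
    ∑' g, ‖∑' h, f (g * h⁻¹, h)‖ ≤ ∑' p, ‖f p‖ := by
  have hs : Summable fun p : G × G => ‖f (mulInvShear G p)‖ :=
    (mulInvShear G).summable_iff.2 hf
  calc ∑' g, ‖∑' h, f (g * h⁻¹, h)‖ ≤ ∑' g, ∑' h, ‖f (g * h⁻¹, h)‖ :=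
        Summable.tsum_le_tsum (fun g => norm_tsum_le_tsum_norm (hs.prod_factor g))
          (hs.prod.of_nonneg_of_le (fun _ => norm_nonneg _)
            fun g => norm_tsum_le_tsum_norm (hs.prod_factor g)) hs.prod
    _ = ∑' p, ‖f (mulInvShear G p)‖ := hs.tsum_prod.symm
    _ = ∑' p, ‖f p‖ := (mulInvShear G).tsum_eq fun p => ‖f p‖

theorem IsDiagG.norm_le {piG : l1 (G × G) → l1 G} (hpiG : IsDiagG piG) (w : l1 (G × G)) :
    ‖piG w‖ ≤ ‖w‖ := by
  simpa only [l1.norm_eq_tsum_norm, hpiG w] using tsum_norm_tsum_mul_inv_le (l1.summable_norm w)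

theorem IsConvG.norm_le {mulG : l1 G → l1 G → l1 G} (hmulG : IsConvG mulG) (c b : l1 G) :
    ‖mulG c b‖ ≤ ‖c‖ * ‖b‖ := by
  have hcb : Summable fun p : G × G => ‖c p.1 * b p.2‖ := by
    simpa only [norm_mul] using (l1.summable_norm c).mul_of_nonneg (l1.summable_norm b)
      (fun _ => norm_nonneg _) (fun _ => norm_nonneg _)
  calc ‖mulG c b‖ ≤ ∑' p : G × G, ‖c p.1 * b p.2‖ := by
        simpa only [l1.norm_eq_tsum_norm, hmulG c b] using tsum_norm_tsum_mul_inv_le hcb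
    _ = ‖c‖ * ‖b‖ := by
        simp only [norm_mul, l1.norm_eq_tsum_norm c, l1.norm_eq_tsum_norm b]
        exact (tsum_mul_tsum_of_summable_norm (f := fun g => ‖c g‖) (g := fun g => ‖b g‖)
          (by simpa using l1.summable_norm c) (by simpa using l1.summable_norm b)).symm

theorem IsConvG.norm_ite_sub_le {mulG : l1 G → l1 G → l1 G} (hmulG : IsConvG mulG)
    (P : Prop) [Decidable P] (c b : l1 G) :
    ‖(if P then mulG c b else 0) - b‖ ≤ (‖c‖ + 1) * ‖b‖ := by
  split_ifs
  · calc ‖mulG c b - b‖ ≤ ‖mulG c b‖ + ‖b‖ := norm_sub_le _ _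
      _ ≤ (‖c‖ + 1) * ‖b‖ := by linarith [hmulG.norm_le c b]
  · rw [zero_sub, norm_neg]
    exact le_mul_of_one_le_left (norm_nonneg b) (by linarith [norm_nonneg c])

end GroupAlgebra

theorem tsum_ite_fst_mem {α β : Type*} (s : Finset α) {f : β → ℂ}
    (hf : Summable fun b => ‖f b‖) :
    ∑' p : α × β, (if p.1 ∈ s then f p.2 else 0) = s.card * ∑' b, f b := by
  have hs : Summable fun a : α => ‖if a ∈ s then (1 : ℂ) else 0‖ :=
    summable_of_ne_finset_zero (s := s) fun a ha => by simp [ha]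
  have hcard : ∑' a : α, (if a ∈ s then (1 : ℂ) else 0) = s.card := by
    rw [tsum_eq_sum (s := s) fun a ha => by simp [ha]]
    simp
  rw [← hcard, tsum_mul_tsum_of_summable_norm hs hf]
  exact tsum_congr fun p => by split_ifs <;> simp

section Brandt

variable {I G : Type*}

theorem IsE.apply {E : l1 (G × G) → I → I → I → I → l1 ((I × G × I) × (I × G × I))}
    (hE : IsE E) (b : l1 (G × G)) (i j i' j' u v u' v' : I) (g g' : G) :
    E b i j i' j' ((u, g, v), (u', g', v')) =
      if (u, v, u', v') = (i, j, i', j') then b (g, g') else 0 := by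
  split_ifs with h
  · simp only [Prod.mk.injEq] at h
    obtain ⟨rfl, rfl, rfl, rfl⟩ := h
    exact (hE b u v u' v').1 g g'
  · exact (hE b i j i' j').2 u v u' v' g g' h

theorem Wnet_apply {E : l1 (G × G) → I → I → I → I → l1 ((I × G × I) × (I × G × I))}
    (hE : IsE E) {Λ : Type*} (m : Λ → l1 (G × G)) (F : Finset I) (l : Λ)
    (u v u' v' : I) (g g' : G) :
    Wnet E m F l ((u, g, v), (u', g', v')) =
      (F.card : ℂ)⁻¹ * if u = v' ∧ v = u' ∧ u ∈ F ∧ v ∈ F then m l (g, g') else 0 := by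
  simp only [Wnet, lp.coeFn_smul, lp.coeFn_sum, Pi.smul_apply, Finset.sum_apply, smul_eq_mul,
    hE.apply]
  congr 1
  split_ifs with h
  · obtain ⟨rfl, rfl, hu, hv⟩ := h
    rw [Finset.sum_eq_single_of_mem u hu fun i _ hi => Finset.sum_eq_zero fun j _ => if_neg ?_,
      Finset.sum_eq_single_of_mem v hv fun j _ hj => if_neg ?_, if_pos rfl]
    all_goals simp_all [eq_comm]
  · refine Finset.sum_eq_zero fun i hi => Finset.sum_eq_zero fun j hj => if_neg ?_
    simp only [Prod.mk.injEq]
    rintro ⟨rfl, rfl, rfl, rfl⟩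
    exact h ⟨rfl, rfl, hi, hj⟩

variable [Group G]

theorem IsDiagT.apply_Wnet {piT : l1 ((I × G × I) × (I × G × I)) → l1 (I × G × I)}
    (hpiT : IsDiagT piT)
    {E : l1 (G × G) → I → I → I → I → l1 ((I × G × I) × (I × G × I))} (hE : IsE E)
    {piG : l1 (G × G) → l1 G} (hpiG : IsDiagG piG) {Λ : Type*} (m : Λ → l1 (G × G))
    {F : Finset I} (hF : F.Nonempty) (l : Λ) (u : I) (x : G) (k : I) :
    piT (Wnet E m F l) (u, x, k) = if u = k ∧ u ∈ F then piG (m l) x else 0 := by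
  simp only [hpiT _ u x k, Wnet_apply hE, true_and, tsum_mul_left]
  split_ifs with h
  · obtain ⟨rfl, hu⟩ := h
    have hsum : Summable fun h : G => ‖m l (x * h⁻¹, h)‖ :=
      (l1.summable_norm (m l)).comp_injective fun _ _ e => (Prod.ext_iff.1 e).2
    simp only [hu, true_and]
    rw [tsum_ite_fst_mem F hsum, inv_mul_cancel_left₀ (by exact_mod_cast hF.card_pos.ne'), hpiG]
  · rw [tsum_congr fun q => if_neg fun hq => h ⟨hq.1, hq.2.1⟩, tsum_zero, mul_zero]

theorem IsConvT.apply_of_diag {mulT : l1 (I × G × I) → l1 (I × G × I) → l1 (I × G × I)}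
    (hmulT : IsConvT mulT) {mulG : l1 G → l1 G → l1 G} (hmulG : IsConvG mulG)
    {F : Finset I} {c : l1 G} {p : l1 (I × G × I)}
    (hp : ∀ u x k, p (u, x, k) = if u = k ∧ u ∈ F then c x else 0)
    (a : l1 (I × G × I)) (u : I) (g : G) (v : I) :
    mulT p a (u, g, v) = if u ∈ F then mulG c (block a u v) g else 0 := by
  simp only [hmulT _ _ u g v, hp]
  split_ifs with hu
  · rw [hmulG, ← (Prod.mk_right_injective u).tsum_eq]
    · simp [hu]
    · intro q hq
      refine ⟨q.2, Prod.ext ?_ rfl⟩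
      by_contra hk
      exact hq (by simp [hk])
  · simp [hu]

theorem IsConvT.block_sub_of_diag {mulT : l1 (I × G × I) → l1 (I × G × I) → l1 (I × G × I)}
    (hmulT : IsConvT mulT) {mulG : l1 G → l1 G → l1 G} (hmulG : IsConvG mulG)
    {F : Finset I} {c : l1 G} {p : l1 (I × G × I)}
    (hp : ∀ u x k, p (u, x, k) = if u = k ∧ u ∈ F then c x else 0)
    (a : l1 (I × G × I)) (u v : I) :
    block (mulT p a - a) u v = (if u ∈ F then mulG c (block a u v) else 0) - block a u v := by
  refine lp.ext (funext fun g => ?_)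
  simp only [block_apply, lp.coeFn_sub, Pi.sub_apply, hmulT.apply_of_diag hmulG hp]
  split_ifs <;> simp

end Brandt

theorem tendsto_ite_mem_atTop {I Λ X : Type*} [Preorder Λ] [TopologicalSpace X] [Zero X]
    {f : Λ → X} {b : X} (hf : Tendsto f atTop (𝓝 b)) (u : I) :
    Tendsto (fun p : {F : Finset I // F.Nonempty} × Λ => if u ∈ p.1.val then f p.2 else 0)
      atTop (𝓝 b) := by
  have hu : ∀ᶠ F : {F : Finset I // F.Nonempty} in atTop, u ∈ F.val :=
    (eventually_ge_atTop ⟨{u}, Finset.singleton_nonempty u⟩).mono fun F hF =>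
      hF (Finset.mem_singleton_self u)
  rw [← prod_atTop_atTop_eq]
  exact (hf.comp tendsto_snd).congr'
    ((tendsto_fst.eventually hu).mono fun p hp => (if_pos hp).symm)

theorem diag_W_mul_tendsto_general {G : Type*} [Group G] {I : Type*}
    {Λ : Type*} [Preorder Λ]
    (mulG : l1 G → l1 G → l1 G) (hmulG : IsConvG mulG)
    (actLG : l1 G → l1 (G × G) → l1 (G × G))
    (actRG : l1 (G × G) → l1 G → l1 (G × G))
    (piG : l1 (G × G) → l1 G) (hpiG : IsDiagG piG)
    (m : Λ → l1 (G × G)) (hm : IsBddApproxDiagG mulG actLG actRG piG m)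
    (E : l1 (G × G) → I → I → I → I → l1 ((I × G × I) × (I × G × I))) (hE : IsE E)
    (mulT : l1 (I × G × I) → l1 (I × G × I) → l1 (I × G × I)) (hmulT : IsConvT mulT)
    (piT : l1 ((I × G × I) × (I × G × I)) → l1 (I × G × I)) (hpiT : IsDiagT piT)
    (a : l1 (I × G × I)) :
    Filter.Tendsto
      (fun p : {F : Finset I // F.Nonempty} × Λ => mulT (piT (Wnet E m p.1.val p.2)) a)
      Filter.atTop (nhds a) := by
  obtain ⟨M, hM⟩ := hm.1
  have hnorm (p : {F : Finset I // F.Nonempty} × Λ) :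
      ‖mulT (piT (Wnet E m p.1.val p.2)) a - a‖ = ∑' uv : I × I,
        ‖(if uv.1 ∈ p.1.val then mulG (piG (m p.2)) (block a uv.1 uv.2) else 0) -
          block a uv.1 uv.2‖ := by
    simp only [norm_eq_tsum_norm_block (_ - a),
      hmulT.block_sub_of_diag hmulG (hpiT.apply_Wnet hE hpiG m p.1.2 p.2)]
  rw [tendsto_iff_norm_sub_tendsto_zero, funext hnorm, ← tsum_zero (α := ℝ) (β := I × I)]
  refine tendsto_tsum_of_dominated_convergence (bound := fun uv => (M + 1) * ‖block a uv.1 uv.2‖)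
    ((summable_norm_block a).mul_left _)
    (fun uv => tendsto_iff_norm_sub_tendsto_zero.1 (tendsto_ite_mem_atTop (hm.2 _).2 uv.1))
    (.of_forall fun p uv => (norm_norm _).trans_le ((hmulG.norm_ite_sub_le _ _ _).trans ?_))
  gcongr
  exact (hpiG.norm_le _).trans (hM _)

theorem diag_W_mul_tendsto {G : Type*} [Group G] {I : Type*} [Nonempty I]
    {Λ : Type*} [Preorder Λ] [IsDirected Λ (· ≤ ·)] [Nonempty Λ]
    (mulG : l1 G → l1 G → l1 G) (hmulG : IsConvG mulG)
    (actLG : l1 G → l1 (G × G) → l1 (G × G)) (hactLG : IsLeftActG actLG)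
    (actRG : l1 (G × G) → l1 G → l1 (G × G)) (hactRG : IsRightActG actRG)
    (piG : l1 (G × G) → l1 G) (hpiG : IsDiagG piG)
    (m : Λ → l1 (G × G)) (hm : IsBddApproxDiagG mulG actLG actRG piG m)
    (E : l1 (G × G) → I → I → I → I → l1 ((I × G × I) × (I × G × I))) (hE : IsE E)
    (mulT : l1 (I × G × I) → l1 (I × G × I) → l1 (I × G × I)) (hmulT : IsConvT mulT)
    (piT : l1 ((I × G × I) × (I × G × I)) → l1 (I × G × I)) (hpiT : IsDiagT piT)
    (a : l1 (I × G × I)) :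
    Filter.Tendsto
      (fun p : {F : Finset I // F.Nonempty} × Λ => mulT (piT (Wnet E m p.1.val p.2)) a)
      Filter.atTop (nhds a) :=
  diag_W_mul_tendsto_general mulG hmulG actLG actRG piG hpiG m hm E hE mulT hmulT piT hpiT a

end
end
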